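/- Let m ≥ 5 be a natural number and let d be a natural number with d + 1 ≥ 4πe·m/ln(m). Then (d+1)! ≥ 2^(2m+2) · 4^(2m) · (2π)^(d+1) · m. -/

import Mathlib

open Real

lemma fact_lb (n : ℕ) : ((n : ℝ) / Real.exp 1) ^ n ≤ n.factorial := by
  induction n with
  | zero => simp
  | succ n ih =>
    have he : (0:ℝ) < Real.exp 1 := Real.exp_pos 1
    have he2 : (2:ℝ) ≤ Real.exp 1 := by
      have := Real.add_one_le_exp (1:ℝ); linarith
    have key : (((n:ℝ) + 1) / Real.exp 1) ^ (n + 1) ≤ ((n:ℝ) + 1) * ((n : ℝ) / Real.exp 1) ^ n := by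
      rcases Nat.eq_zero_or_pos n with h0 | hp
      · subst h0
        simp only [Nat.cast_zero, zero_add, pow_one, pow_zero, mul_one]
        rw [div_le_one he]; linarith
      · have hn : (0:ℝ) < n := by exact_mod_cast hp
        have h1 : (1 + 1 / (n : ℝ)) ^ n ≤ Real.exp 1 := by
          calc (1 + 1 / (n : ℝ)) ^ n ≤ (Real.exp (1 / n)) ^ n := by
                apply pow_le_pow_left₀ (by positivity)
                linarith [Real.add_one_le_exp (1 / (n:ℝ))]
            _ = Real.exp (n * (1 / n)) := (Real.exp_nat_mul _ n).symm
            _ = Real.exp 1 := by rw [mul_one_div, div_self (ne_of_gt hn)]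
        have h2 : ((n : ℝ) + 1) ^ n ≤ (n : ℝ) ^ n * Real.exp 1 := by
          have hq : ((n:ℝ) + 1) ^ n = (n:ℝ) ^ n * (1 + 1/(n:ℝ)) ^ n := by
            rw [← mul_pow]; congr 1; field_simp
          rw [hq]
          exact mul_le_mul_of_nonneg_left h1 (by positivity)
        rw [div_pow, div_pow, div_le_iff₀ (by positivity)]
        calc ((n:ℝ)+1)^(n+1) = ((n:ℝ)+1)^n * ((n:ℝ)+1) := pow_succ _ _
          _ ≤ ((n:ℝ)^n * Real.exp 1) * ((n:ℝ)+1) :=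
              mul_le_mul_of_nonneg_right h2 (by positivity)
          _ = ((n:ℝ)+1) * ((n:ℝ)^n / Real.exp 1 ^ n) * Real.exp 1 ^ (n+1) := by
              rw [pow_succ]
              have hen : Real.exp 1 ^ n ≠ 0 := by positivity
              field_simp
    have hstep : ((n:ℝ) + 1) * ((n : ℝ) / Real.exp 1) ^ n ≤ ((n+1).factorial : ℝ) := by
      rw [Nat.factorial_succ]
      push_cast
      exact mul_le_mul_of_nonneg_left ih (by positivity)
    calc (((n+1 : ℕ) : ℝ) / Real.exp 1) ^ (n+1) = (((n:ℝ)+1) / Real.exp 1) ^ (n+1) := by push_cast; ring_nf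
      _ ≤ _ := key.trans hstep

theorem stmt_3 (m d : ℕ) (hm : m ≥ 5)
    (hd : (d + 1 : ℝ) ≥ 4 * Real.pi * Real.exp 1 * m / Real.log m) :
    (Nat.factorial (d + 1) : ℝ) ≥ 2 ^ (2 * m + 2) * 4 ^ (2 * m) * (2 * Real.pi) ^ (d + 1) * m := by
  set n : ℕ := d + 1 with hn
  have hpi : (3.14:ℝ) < Real.pi := by linarith [Real.pi_gt_d6]
  have hpi0 : (0:ℝ) < Real.pi := by linarith
  have he : (2.7:ℝ) < Real.exp 1 := by linarith [Real.exp_one_gt_d9]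
  have he0 : (0:ℝ) < Real.exp 1 := Real.exp_pos 1
  have hm1 : (1:ℝ) < m := by exact_mod_cast lt_of_lt_of_le (by norm_num) hm
  have hm0 : (0:ℝ) < m := by linarith
  set L : ℝ := Real.log m with hLdef
  have hL0 : 0 < L := Real.log_pos hm1
  -- L ≤ 2 * sqrt m / e
  have hsq0 : (0:ℝ) < Real.sqrt m := Real.sqrt_pos.mpr hm0
  have hLsq : L ≤ 2 * Real.sqrt m / Real.exp 1 := by
    have h := Real.log_le_sub_one_of_pos (show (0:ℝ) < Real.sqrt m / Real.exp 1 by positivity)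
    rw [Real.log_div (ne_of_gt hsq0) (ne_of_gt he0), Real.log_exp] at h
    have hls : Real.log (Real.sqrt m) = L / 2 := by
      rw [Real.log_sqrt (le_of_lt hm0)]
    have hse : Real.sqrt m / Real.exp 1 ≤ Real.sqrt m := by
      rw [div_le_iff₀ he0]; nlinarith
    rw [hls] at h
    have h2' : L / 2 ≤ Real.sqrt m / Real.exp 1 := by linarith
    calc L = 2 * (L / 2) := by ring
      _ ≤ 2 * (Real.sqrt m / Real.exp 1) := by linarith
      _ = 2 * Real.sqrt m / Real.exp 1 := by ring
  set y : ℝ := 2 * m / L with hydef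
  have hy0 : 0 < y := by positivity
  -- log y ≥ L / 2
  have hlogy : L / 2 ≤ Real.log y := by
    have hey : Real.exp 1 * Real.sqrt m ≤ y := by
      rw [hydef, le_div_iff₀ hL0]
      have hc : Real.exp 1 * Real.sqrt m * (2 * Real.sqrt m / Real.exp 1) = 2 * (Real.sqrt m * Real.sqrt m) := by
        field_simp
      calc Real.exp 1 * Real.sqrt m * L ≤ Real.exp 1 * Real.sqrt m * (2 * Real.sqrt m / Real.exp 1) := by
            apply mul_le_mul_of_nonneg_left hLsq (by positivity)
        _ = 2 * (Real.sqrt m * Real.sqrt m) := hc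
        _ = 2 * m := by rw [Real.mul_self_sqrt (le_of_lt hm0)]
    calc L / 2 = Real.log (Real.sqrt m) := (Real.log_sqrt (le_of_lt hm0)).symm
      _ ≤ Real.log (Real.exp 1 * Real.sqrt m) := by
          apply Real.log_le_log (by positivity)
          nlinarith
      _ ≤ Real.log y := Real.log_le_log (by positivity) hey
  -- n * log y ≥ 2 π e m
  have hnlog : 2 * Real.pi * Real.exp 1 * m ≤ (n:ℝ) * Real.log y := by
    have h1 : 4 * Real.pi * Real.exp 1 * m / L * (L / 2) ≤ (n:ℝ) * Real.log y := by
      apply mul_le_mul (by push_cast [hn]; linarith) hlogy (by positivity) (Nat.cast_nonneg n)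
    calc 2 * Real.pi * Real.exp 1 * m = 4 * Real.pi * Real.exp 1 * m / L * (L / 2) := by
          field_simp; ring
      _ ≤ _ := h1
  have h9 : (9:ℝ) ≤ 2 * Real.pi * Real.exp 1 := by nlinarith
  have h512 : (512:ℝ) ^ m ≤ y ^ n := by
    calc (512:ℝ) ^ m = ((2:ℝ) ^ 9) ^ m := by norm_num
      _ = (2:ℝ) ^ (9 * m) := by rw [← pow_mul]
      _ ≤ Real.exp 1 ^ (9 * m) := pow_le_pow_left₀ (by norm_num) (by linarith) _
      _ = Real.exp (9 * (m:ℝ)) := by rw [← Real.exp_nat_mul]; congr 1; push_cast; ring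
      _ ≤ Real.exp ((n:ℝ) * Real.log y) := by
          apply Real.exp_le_exp.mpr
          have h9m : 9 * (m:ℝ) ≤ 2 * Real.pi * Real.exp 1 * m := by
            nlinarith [hm0.le]
          linarith
      _ = y ^ n := by rw [Real.exp_nat_mul, Real.exp_log hy0]
  -- nat inequality: 2^(2m+2)*4^(2m)*m ≤ 512^m
  have hnat : (2:ℕ) ^ (2*m+2) * 4 ^ (2*m) * m ≤ 512 ^ m := by
    calc (2:ℕ) ^ (2*m+2) * 4 ^ (2*m) * m ≤ 2 ^ (2*m+2) * 4 ^ (2*m) * 2 ^ m := by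
          gcongr
          exact le_of_lt (Nat.lt_two_pow_self)
      _ = 2 ^ (7*m+2) := by
          rw [show (4:ℕ) = 2^2 by norm_num, ← pow_mul, ← pow_add, ← pow_add]
          congr 1; ring
      _ ≤ 2 ^ (9*m) := by
          apply Nat.pow_le_pow_right (by norm_num)
          omega
      _ = 512 ^ m := by rw [show (512:ℕ) = 2^9 by norm_num, ← pow_mul]
  -- 2π y ≤ n / e
  have hbase : 2 * Real.pi * y ≤ (n:ℝ) / Real.exp 1 := by
    rw [le_div_iff₀ he0, hydef]
    calc 2 * Real.pi * (2 * m / L) * Real.exp 1 = 4 * Real.pi * Real.exp 1 * m / L := by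
          field_simp; ring
      _ ≤ (n:ℝ) := by push_cast [hn]; linarith
  -- combine
  have main : (2:ℝ) ^ (2*m+2) * 4 ^ (2*m) * (2 * Real.pi) ^ n * m ≤ ((n:ℝ)/Real.exp 1) ^ n := by
    calc (2:ℝ) ^ (2*m+2) * 4 ^ (2*m) * (2 * Real.pi) ^ n * m
        = ((2:ℝ) ^ (2*m+2) * 4 ^ (2*m) * m) * (2 * Real.pi) ^ n := by ring
      _ ≤ (512:ℝ) ^ m * (2 * Real.pi) ^ n := by
          apply mul_le_mul_of_nonneg_right _ (by positivity)
          exact_mod_cast hnat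
      _ ≤ y ^ n * (2 * Real.pi) ^ n := mul_le_mul_of_nonneg_right h512 (by positivity)
      _ = (2 * Real.pi * y) ^ n := by rw [← mul_pow]; ring_nf
      _ ≤ ((n:ℝ)/Real.exp 1) ^ n := pow_le_pow_left₀ (by positivity) hbase n
  calc (2:ℝ) ^ (2*m+2) * 4 ^ (2*m) * (2 * Real.pi) ^ n * m ≤ ((n:ℝ)/Real.exp 1) ^ n := main
    _ ≤ (n.factorial : ℝ) := fact_lb n
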